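/- arXiv:1101.1412 — 5 statements merged into one kernel-verified Lean document; each statement's English description precedes it below -/
import Mathlib

section
/- Let G be a finite digraph and e an edge of G such that the terminal vertex of e has in-degree 1. Then for any vertex v of G distinct from the terminal vertex of e, the number of directed spanning subtrees of G/e (the graph with e contracted) with origin v equals the number of directed spanning subtrees of G with origin v. -/
/-- A digraph: a (multi)graph in which multiple edges and loops are allowed,
together with an orientation.  An edge `e` runs from `src e` to `tgt e`. -/
structure MultiDigraph (V E : Type) where
  src : E → V
  tgt : E → V

namespace MultiDigraph

variable {V E : Type}

/-- One step from `a` to `b` along an edge belonging to `T`. -/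
def step (G : MultiDigraph V E) (T : Set E) (a b : V) : Prop :=
  ∃ e ∈ T, G.src e = a ∧ G.tgt e = b

/-- Reachability by a directed path using only edges of `T`. -/
def reach (G : MultiDigraph V E) (T : Set E) : V → V → Prop :=
  Relation.ReflTransGen (G.step T)

/-- `T` is a directed spanning subtree of `G` with origin `u`: no edge of `T`
ends at `u`, every other vertex is the terminal vertex of exactly one edge of
`T`, and every vertex is reachable from `u` through `T` (which forces
connectedness and the absence of cycles). -/
def IsSpanTree (G : MultiDigraph V E) (u : V) (T : Set E) : Prop :=
  (∀ e ∈ T, G.tgt e ≠ u) ∧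
  (∀ w, w ≠ u → ∃! e, e ∈ T ∧ G.tgt e = w) ∧
  (∀ w, G.reach T u w)

/-- The number of directed spanning subtrees of `G` with origin `u`. -/
noncomputable def treeCount (G : MultiDigraph V E) (u : V) : ℕ :=
  Set.ncard {T : Set E | G.IsSpanTree u T}

/-- The digraph `G \ e` obtained by deleting the edge `e`. -/
def delete (G : MultiDigraph V E) (e : E) : MultiDigraph V {f : E // f ≠ e} :=
  ⟨fun f => G.src f.1, fun f => G.tgt f.1⟩

/-- The digraph `G / e` obtained by contracting the edge `e` to a point:
the two endpoints of `e` are identified and `e` is removed. -/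
def contract (G : MultiDigraph V E) (e : E) :
    MultiDigraph (Quot fun a b => a = G.src e ∧ b = G.tgt e) {f : E // f ≠ e} :=
  ⟨fun f => Quot.mk _ (G.src f.1), fun f => Quot.mk _ (G.tgt f.1)⟩

end MultiDigraph

/-!
Since `e` is the only edge into `t := G.tgt e`, every spanning tree `T` of `G` with origin
`v ≠ t` contains `e`. Dropping `e` from `T` gives a spanning tree of `G / e`, and adding `e`
back to a spanning tree of `G / e` gives one of `G`: an edge of `G / e` entering the merged
vertex `{G.src e, t}` enters `G.src e` in `G`, so a path of `G / e` lifts to a path of `G`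
which reaches `t` through `e` when needed.
-/

section IdentifyPair

variable {α : Type*} {x y a b : α}

local notation "q" => Quot.mk (fun a b : α => a = x ∧ b = y)

theorem quot_identify_mk_eq_mk_iff :
    q a = q b ↔ a = b ∨ (a = x ∧ b = y) ∨ (a = y ∧ b = x) := by
  refine ⟨fun h => ?_, ?_⟩
  · replace h := Quot.eq.mp h
    induction h with
    | rel _ _ h => exact .inr (.inl h)
    | refl => exact .inl rfl
    | symm _ _ _ ih => rcases ih with rfl | ⟨rfl, rfl⟩ | ⟨rfl, rfl⟩ <;> tauto
    | trans _ _ _ _ _ ih₁ ih₂ =>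
      rcases ih₁ with rfl | ⟨rfl, rfl⟩ | ⟨rfl, rfl⟩ <;>
        rcases ih₂ with h | h | h <;> tauto
  · rintro (rfl | ⟨rfl, rfl⟩ | ⟨rfl, rfl⟩)
    · rfl
    · exact Quot.sound ⟨rfl, rfl⟩
    · exact (Quot.sound ⟨rfl, rfl⟩).symm

theorem eq_or_of_quot_identify_mk_eq_mk (ha : a ≠ y) (h : q a = q b) :
    b = a ∨ (a = x ∧ b = y) := by
  rcases quot_identify_mk_eq_mk_iff.mp h with rfl | h | ⟨rfl, -⟩
  · exact .inl rfl
  · exact .inr h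
  · exact absurd rfl ha

theorem quot_identify_mk_eq_mk_iff_of_ne (ha : a ≠ y) (hb : b ≠ y) : q a = q b ↔ a = b := by
  refine ⟨fun h => ?_, congrArg _⟩
  rcases eq_or_of_quot_identify_mk_eq_mk ha h with rfl | ⟨-, rfl⟩
  · rfl
  · exact absurd rfl hb

theorem quot_identify_exists_ne_mk_eq (hxy : x ≠ y) (z : Quot fun a b : α => a = x ∧ b = y) :
    ∃ a ≠ y, q a = z := by
  obtain ⟨a, rfl⟩ := Quot.exists_rep z
  by_cases ha : a = y
  · exact ⟨x, hxy, ha ▸ Quot.sound ⟨rfl, rfl⟩⟩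
  · exact ⟨a, ha, rfl⟩

end IdentifyPair

namespace MultiDigraph

variable {V E : Type} {e : E}

def withEdge (e : E) (T' : Set {f : E // f ≠ e}) : Set E :=
  insert e (Subtype.val '' T')

theorem val_mem_withEdge {T' : Set {f : E // f ≠ e}} {g : {f : E // f ≠ e}} :
    g.1 ∈ withEdge e T' ↔ g ∈ T' := by
  simp [withEdge, g.2]

theorem withEdge_injective : Function.Injective (withEdge e) := fun _ _ h =>
  Set.ext fun _ => by rw [← val_mem_withEdge, h, val_mem_withEdge]

theorem withEdge_preimage_val {T : Set E} (he : e ∈ T) : withEdge e (Subtype.val ⁻¹' T) = T := by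
  ext f
  by_cases hf : f = e
  · simp [withEdge, hf, he]
  · simp [withEdge, hf]

variable {G : MultiDigraph V E} {T : Set E} {T' : Set {f : E // f ≠ e}} {v a b c : V}

local notation "q" => Quot.mk (fun a b : V => a = G.src e ∧ b = G.tgt e)

theorem reach_contract_of_reach_withEdge (h : G.reach (withEdge e T') a b) :
    (G.contract e).reach T' (q a) (q b) := by
  induction h with
  | refl => exact .refl
  | tail _ hstep ih =>
    obtain ⟨f, hf, rfl, rfl⟩ := hstep
    by_cases hfe : f = e
    · have hq : q (G.src f) = q (G.tgt f) := by
        subst hfe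
        exact Quot.sound ⟨rfl, rfl⟩
      rwa [← hq]
    · exact ih.tail ⟨⟨f, hfe⟩, val_mem_withEdge.mp hf, rfl, rfl⟩

theorem reach_withEdge_of_mk_eq_mk (hc : c ≠ G.tgt e) (h : q c = q b) :
    G.reach (withEdge e T') c b := by
  rcases eq_or_of_quot_identify_mk_eq_mk hc h with rfl | ⟨rfl, rfl⟩
  · exact .refl
  · exact .single ⟨e, Set.mem_insert _ _, rfl, rfl⟩

section UniqueInEdge

variable (he : ∀ f, G.tgt f = G.tgt e → f = e)
include he

theorem tgt_val_ne_tgt (g : {f : E // f ≠ e}) : G.tgt g.1 ≠ G.tgt e :=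
  fun h => g.2 (he _ h)

theorem reach_withEdge_of_reach_contract (ha : a ≠ G.tgt e)
    (h : (G.contract e).reach T' (q a) (q b)) : G.reach (withEdge e T') a b := by
  suffices ∀ z, (G.contract e).reach T' (q a) z → ∀ b, q b = z → G.reach (withEdge e T') a b from
    this _ h b rfl
  intro z hz
  induction hz with
  | refl => exact fun b hb => reach_withEdge_of_mk_eq_mk ha hb.symm
  | tail _ hstep ih =>
    obtain ⟨g, hg, rfl, rfl⟩ := hstep
    intro b hb
    exact ((ih _ rfl).tail ⟨g.1, val_mem_withEdge.mpr hg, rfl, rfl⟩).trans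
      (reach_withEdge_of_mk_eq_mk (tgt_val_ne_tgt he g) hb.symm)

theorem mem_of_isSpanTree (hv : v ≠ G.tgt e) (hT : G.IsSpanTree v T) : e ∈ T := by
  obtain ⟨f, ⟨hf, hft⟩, -⟩ := hT.2.1 _ hv.symm
  exact he f hft ▸ hf

theorem src_ne_tgt_of_isSpanTree (hv : v ≠ G.tgt e) (hT : G.IsSpanTree v T) :
    G.src e ≠ G.tgt e := by
  intro hloop
  suffices ∀ w, G.reach T v w → w ≠ G.tgt e from this _ (hT.2.2 _) rfl
  intro w hw
  induction hw with
  | refl => exact hv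
  | tail _ hstep ih =>
    obtain ⟨f, -, rfl, rfl⟩ := hstep
    intro hf
    rw [he f hf] at ih
    exact ih hloop

theorem isSpanTree_contract_of_isSpanTree_withEdge (hv : v ≠ G.tgt e)
    (hT : G.IsSpanTree v (withEdge e T')) : (G.contract e).IsSpanTree (q v) T' := by
  refine ⟨fun g hg h => ?_, fun z hz => ?_, fun z => ?_⟩
  · exact hT.1 g.1 (val_mem_withEdge.mpr hg)
      ((quot_identify_mk_eq_mk_iff_of_ne (tgt_val_ne_tgt he g) hv).mp h)
  · obtain ⟨w, hw, rfl⟩ := quot_identify_exists_ne_mk_eq (src_ne_tgt_of_isSpanTree he hv hT) z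
    obtain ⟨f, ⟨hf, rfl⟩, huniq⟩ := hT.2.1 w fun h => hz (by rw [h])
    have hfe : f ≠ e := fun h => hw (by rw [h])
    refine ⟨⟨f, hfe⟩, ⟨val_mem_withEdge.mp hf, rfl⟩, fun g ⟨hg, hgt⟩ => Subtype.ext ?_⟩
    exact huniq g.1
      ⟨val_mem_withEdge.mpr hg, (quot_identify_mk_eq_mk_iff_of_ne (tgt_val_ne_tgt he g) hw).mp hgt⟩
  · obtain ⟨w, rfl⟩ := Quot.exists_rep z
    exact reach_contract_of_reach_withEdge (hT.2.2 w)

theorem isSpanTree_withEdge_of_isSpanTree_contract (hv : v ≠ G.tgt e)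
    (hT : (G.contract e).IsSpanTree (q v) T') : G.IsSpanTree v (withEdge e T') := by
  refine ⟨?_, fun w hw => ?_, fun w => reach_withEdge_of_reach_contract he hv (hT.2.2 _)⟩
  · rintro f (rfl | ⟨g, hg, rfl⟩) h
    · exact hv h.symm
    · exact hT.1 g hg (congrArg _ h)
  by_cases hwt : w = G.tgt e
  · subst hwt
    exact ⟨e, ⟨Set.mem_insert _ _, rfl⟩, fun f hf => he f hf.2⟩
  obtain ⟨g, ⟨hg, hgt⟩, huniq⟩ :=
    hT.2.1 (q w) fun h => hw ((quot_identify_mk_eq_mk_iff_of_ne hwt hv).mp h)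
  refine ⟨g.1, ⟨val_mem_withEdge.mpr hg,
    (quot_identify_mk_eq_mk_iff_of_ne (tgt_val_ne_tgt he g) hwt).mp hgt⟩, ?_⟩
  rintro f ⟨hf, rfl⟩
  have hfe : f ≠ e := fun h => hwt (by rw [h])
  exact congrArg Subtype.val (huniq ⟨f, hfe⟩ ⟨val_mem_withEdge.mp hf, rfl⟩)

theorem isSpanTree_withEdge_iff (hv : v ≠ G.tgt e) :
    G.IsSpanTree v (withEdge e T') ↔ (G.contract e).IsSpanTree (q v) T' :=
  ⟨isSpanTree_contract_of_isSpanTree_withEdge he hv,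
    isSpanTree_withEdge_of_isSpanTree_contract he hv⟩

theorem setOf_isSpanTree_eq_image_withEdge (hv : v ≠ G.tgt e) :
    {T | G.IsSpanTree v T} = withEdge e '' {T' | (G.contract e).IsSpanTree (q v) T'} := by
  ext T
  refine ⟨fun hT => ?_, fun ⟨T', hT', hT⟩ => hT ▸ (isSpanTree_withEdge_iff he hv).mpr hT'⟩
  have hT' := withEdge_preimage_val (mem_of_isSpanTree he hv hT)
  exact ⟨_, (isSpanTree_withEdge_iff he hv).mp (hT'.symm ▸ hT), hT'⟩

theorem treeCount_contract_eq (hv : v ≠ G.tgt e) :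
    (G.contract e).treeCount (q v) = G.treeCount v := by
  rw [treeCount, treeCount, setOf_isSpanTree_eq_image_withEdge he hv,
    Set.ncard_image_of_injective _ withEdge_injective]

end UniqueInEdge

end MultiDigraph

theorem treeCount_contract_of_indegree_one_general {V E : Type}
    (G : MultiDigraph V E) (e : E)
    (hdeg : {f : E | G.tgt f = G.tgt e}.ncard = 1)
    (v : V) (hv : v ≠ G.tgt e) :
    (G.contract e).treeCount (Quot.mk _ v) = G.treeCount v := by
  obtain ⟨a, ha⟩ := Set.ncard_eq_one.mp hdeg
  have hunique : {f : E | G.tgt f = G.tgt e}.Subsingleton := ha ▸ Set.subsingleton_singleton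
  exact MultiDigraph.treeCount_contract_eq (fun f hf => hunique hf rfl) hv

/-- **Contracting an edge whose terminal vertex has in-degree 1.**
If the terminal vertex of the edge `e` of a finite digraph `G` has in-degree
`1`, then for any vertex `v` distinct from the terminal vertex of `e`, the
number of directed spanning subtrees of `G / e` with origin (the image of)
`v` equals the number of directed spanning subtrees of `G` with origin `v`. -/
theorem treeCount_contract_of_indegree_one {V E : Type} [Finite V] [Finite E]
    (G : MultiDigraph V E) (e : E)
    (hdeg : {f : E | G.tgt f = G.tgt e}.ncard = 1)
    (v : V) (hv : v ≠ G.tgt e) :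
    (G.contract e).treeCount (Quot.mk _ v) = G.treeCount v :=
  treeCount_contract_of_indegree_one_general G e hdeg v hv
end

section
/- Let G be a finite planar digraph embedded in the 2-sphere such that for every region r of the complement of G in the sphere, the boundary of r is a (directed) cycle. Then G is O-connected: for any two vertices u, v there is a directed path from u to v. -/
namespace MultiDigraph

variable {V E : Type}

/-- `G` is `O`-connected: any vertex can be reached from any other by a
directed path. -/
def OConnected (G : MultiDigraph V E) : Prop :=
  ∀ u v : V, G.reach Set.univ u v

end MultiDigraph

/-- The 2-sphere. -/
abbrev Sphere2 : Type := Metric.sphere (0 : EuclideanSpace ℝ (Fin 3)) 1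

/-- An embedding of a digraph into the 2-sphere: vertices go to distinct
points, each edge is realised by an arc joining the images of its endpoints,
arcs are injective (except that the two endpoints of a loop coincide),
interiors of arcs avoid vertices, and distinct arcs meet only at vertices. -/
structure SphereEmbedding {V E : Type} (G : MultiDigraph V E) where
  vmap : V → Sphere2
  emap : E → C(unitInterval, Sphere2)
  vmap_inj : Function.Injective vmap
  emap_zero : ∀ e, emap e 0 = vmap (G.src e)
  emap_one : ∀ e, emap e 1 = vmap (G.tgt e)
  emap_inj : ∀ e, ∀ s t : unitInterval, emap e s = emap e t →
    s = t ∨ (s = 0 ∧ t = 1) ∨ (s = 1 ∧ t = 0)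
  emap_interior : ∀ e, ∀ s : unitInterval, s ≠ 0 → s ≠ 1 →
    emap e s ∉ Set.range vmap
  emap_disjoint : ∀ e f, e ≠ f → ∀ s t : unitInterval,
    emap e s = emap f t → emap e s ∈ Set.range vmap

/-- The subset of the sphere occupied by the embedded graph. -/
def SphereEmbedding.image {V E : Type} {G : MultiDigraph V E}
    (emb : SphereEmbedding G) : Set Sphere2 :=
  Set.range emb.vmap ∪ ⋃ e : E, Set.range fun t => emb.emap e t

/-!
Let `R` be the set of vertices reachable from `u`. Every edge lies on the boundary walk of some
face: arcs have empty interior (a nonempty open subset of the sphere does not embed into an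
interval), so some face comes arbitrarily close to an interior point of the arc of `e`; as that
point lies on no other arc, the boundary walk of this face passes through `e`. Following
that closed walk from the head of an edge entering `R` leads back to its tail, so `R` is closed
under edges in both directions. If `R` were proper, the drawing would split into two disjoint
closed parts, the vertices of `R` with their edges and the rest. A face boundary is a closed walk,
hence lies in one part; attaching each face to its part splits the connected sphere into two
disjoint nonempty open sets.
-/

open Set Function Topology

section Dimension

variable {E : Type*} [NormedAddCommGroup E] [NormedSpace ℝ E]

theorem Continuous.not_injective_of_one_lt_rank (h : 1 < Module.rank ℝ E) {f : E → ℝ}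
    (hf : Continuous f) : ¬ Injective f := by
  intro hinj
  have : Nontrivial E := (rank_pos_iff_nontrivial (R := ℝ)).1 (zero_lt_one.trans h)
  obtain ⟨a, b, hab⟩ := exists_pair_ne E
  wlog hlt : f a < f b generalizing a b
  · exact this b a hab.symm ((hinj.ne hab).lt_or_gt.resolve_left hlt)
  have hmid : (f a + f b) / 2 ∈ Icc (f a) (f b) := ⟨by linarith, by linarith⟩
  obtain ⟨w, hw⟩ := intermediate_value_univ a b hf hmid
  -- the middle value is also attained off `w`, since `{w}ᶜ` is connected
  have ha : a ∈ ({w}ᶜ : Set E) := by rintro rfl; linarith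
  have hb : b ∈ ({w}ᶜ : Set E) := by rintro rfl; linarith
  obtain ⟨z, hz, hfz⟩ := (isConnected_compl_singleton_of_one_lt_rank h w).isPreconnected
    |>.intermediate_value ha hb hf.continuousOn hmid
  exact hz (hinj (hfz.trans hw.symm))

variable {M : Type*} [TopologicalSpace M] [ChartedSpace E M]

theorem ChartedSpace.exists_continuous_injective_range_subset {U : Set M} (hU : IsOpen U)
    (hne : U.Nonempty) : ∃ h : E → M, Continuous h ∧ Injective h ∧ range h ⊆ U := by
  obtain ⟨p, hp⟩ := hne
  set e := chartAt E p
  have hO : e p ∈ e.target ∩ e.symm ⁻¹' U :=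
    ⟨mem_chart_target E p, by rwa [mem_preimage, e.left_inv (mem_chart_source E p)]⟩
  obtain ⟨r, hr, hball⟩ := Metric.isOpen_iff.1 (e.isOpen_inter_preimage_symm hU) _ hO
  set b := OpenPartialHomeomorph.univBall (e p) r
  have hb : ∀ x, b x ∈ e.target ∩ e.symm ⁻¹' U := fun x =>
    hball (by
      simpa [b, OpenPartialHomeomorph.univBall_target _ hr] using
        b.map_source (by simp [b] : x ∈ b.source))
  refine ⟨e.symm ∘ b, e.continuousOn_symm.comp_continuous
    (OpenPartialHomeomorph.continuous_univBall _ _) fun x => (hb x).1, fun x y hxy => ?_,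
    range_subset_iff.2 fun x => (hb x).2⟩
  exact b.injOn (by simp [b]) (by simp [b]) (e.symm.injOn (hb x).1 (hb y).1 hxy)

variable [T2Space M]

theorem interior_image_eq_empty_of_injOn (hE : 1 < Module.rank ℝ E) {g : unitInterval → M}
    (hg : Continuous g) {s : Set unitInterval} (hs : IsClosed s) (hinj : InjOn g s) :
    interior (g '' s) = ∅ := by
  by_contra hne
  obtain ⟨h, hh, hhinj, hrange⟩ := ChartedSpace.exists_continuous_injective_range_subset (E := E)
    isOpen_interior (nonempty_iff_ne_empty.2 hne)
  have : CompactSpace s := isCompact_iff_compactSpace.1 hs.isCompact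
  have hemb : IsClosedEmbedding (s.domRestrict g) :=
    (hg.comp continuous_subtype_val).isClosedEmbedding hinj.injective
  have hlift : ∀ x, ∃ t : s, s.domRestrict g t = h x := fun x => by
    obtain ⟨t, ht, hgt⟩ := interior_subset (hrange ⟨x, rfl⟩)
    exact ⟨⟨t, ht⟩, hgt⟩
  choose ψ hgψ using hlift
  have hψ : Continuous ψ :=
    hemb.continuous_iff.2 (by rwa [show s.domRestrict g ∘ ψ = h from funext hgψ])
  refine (hψ.subtype_val.subtype_val).not_injective_of_one_lt_rank hE fun x y hxy => hhinj ?_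
  rw [← hgψ x, ← hgψ y, Subtype.ext (Subtype.ext hxy)]

theorem interior_range_eq_empty_of_arc (hE : 1 < Module.rank ℝ E) {g : unitInterval → M}
    (hg : Continuous g) (harc : ∀ s t, g s = g t → s = t ∨ (s = 0 ∧ t = 1) ∨ (s = 1 ∧ t = 0)) :
    interior (range g) = ∅ := by
  let c : unitInterval := ⟨1 / 2, by norm_num, by norm_num⟩
  have hc0 : ¬ c ≤ 0 := fun h => by have := Subtype.coe_le_coe.2 h; norm_num [c] at this
  have hc1 : ¬ 1 ≤ c := fun h => by have := Subtype.coe_le_coe.2 h; norm_num [c] at this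
  have hinj₁ : InjOn g (Iic c) := fun a ha b hb hab => by
    rcases harc a b hab with h | ⟨-, rfl⟩ | ⟨rfl, -⟩
    exacts [h, absurd hb hc1, absurd ha hc1]
  have hinj₂ : InjOn g (Ici c) := fun a ha b hb hab => by
    rcases harc a b hab with h | ⟨rfl, -⟩ | ⟨-, rfl⟩
    exacts [h, absurd ha hc0, absurd hb hc0]
  rw [← image_univ, ← Iic_union_Ici (a := c), image_union,
    interior_union_isClosed_of_interior_empty (isClosed_Iic.isCompact.image hg).isClosed
      (interior_image_eq_empty_of_injOn hE hg isClosed_Ici hinj₂),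
    interior_image_eq_empty_of_injOn hE hg isClosed_Iic hinj₁]

theorem interior_singleton_eq_empty_of_one_lt_rank (hE : 1 < Module.rank ℝ E) (x : M) :
    interior {x} = ∅ := by
  simpa using interior_image_eq_empty_of_injOn hE (continuous_const (y := x)) isClosed_singleton
    (injOn_singleton _ (0 : unitInterval))

end Dimension

theorem interior_iUnion_eq_empty_of_isClosed {X ι : Type*} [TopologicalSpace X] [BaireSpace X]
    [Countable ι] {s : ι → Set X} (hc : ∀ i, IsClosed (s i)) (hs : ∀ i, interior (s i) = ∅) :
    interior (⋃ i, s i) = ∅ := by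
  simp only [interior_eq_empty_iff_dense_compl, compl_iUnion] at hs ⊢
  exact dense_iInter_of_isOpen (fun i => (hc i).isOpen_compl) hs

section Regions

variable {X : Type*} [TopologicalSpace X]

theorem IsPreconnected.subset_of_disjoint_frontier {s t : Set X} (hs : IsPreconnected s)
    (hd : Disjoint s (frontier t)) (hne : (s ∩ t).Nonempty) : s ⊆ t := by
  have hsub : s ⊆ interior t ∪ (closure t)ᶜ := fun x hx => by
    by_cases hxc : x ∈ closure t
    · exact Or.inl (by_contra fun hxi => hd.notMem_of_mem_left hx ⟨hxc, hxi⟩)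
    · exact Or.inr hxc
  obtain ⟨x, hxs, hxt⟩ := hne
  have hxi : x ∈ interior t := (hsub hxs).resolve_right (not_not.2 (subset_closure hxt))
  exact (hs.subset_left_of_subset_union isOpen_interior isClosed_closure.isOpen_compl
    (disjoint_compl_right.mono_left interior_subset_closure) hsub ⟨x, hxs, hxi⟩).trans
    interior_subset

/-- The component of `Fᶜ` through `m` meets the region of `y` without crossing its frontier, so
it would lie inside that region, which avoids `m ∈ A`. -/
theorem not_frontier_connectedComponentIn_subset {A F : Set X} {m y : X} (hmA : m ∈ A)
    (hy : y ∈ connectedComponentIn Fᶜ m) (hyA : y ∉ A) :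
    ¬ frontier (connectedComponentIn Aᶜ y) ⊆ F := by
  intro hfr
  have hm : m ∈ Fᶜ := connectedComponentIn_nonempty_iff.1 ⟨y, hy⟩
  have hsub := isPreconnected_connectedComponentIn.subset_of_disjoint_frontier
    (disjoint_compl_left.mono (connectedComponentIn_subset _ _) hfr)
    ⟨y, hy, mem_connectedComponentIn hyA⟩
  exact connectedComponentIn_subset _ _ (hsub (mem_connectedComponentIn hm)) hmA

variable [LocallyConnectedSpace X]

theorem exists_frontier_connectedComponentIn_not_subset {A F : Set X} (hF : IsClosed F)
    (hA : interior A = ∅) {m : X} (hmA : m ∈ A) (hmF : m ∉ F) :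
    ∃ y ∉ A, ¬ frontier (connectedComponentIn Aᶜ y) ⊆ F := by
  have hopen : IsOpen (connectedComponentIn Fᶜ m) := hF.isOpen_compl.connectedComponentIn
  obtain ⟨y, hy, hyA⟩ : (connectedComponentIn Fᶜ m \ A).Nonempty := by
    by_contra h
    rw [not_nonempty_iff_eq_empty, sdiff_eq_empty] at h
    exact (hA ▸ interior_maximal h hopen) (mem_connectedComponentIn hmF)
  exact ⟨y, hyA, not_frontier_connectedComponentIn_subset hmA hy hyA⟩

theorem isOpen_union_setOf_frontier_subset {A K K' : Set X} (hA : IsClosed A) (hK' : IsClosed K')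
    (hKA : K ⊆ A) (hAK : A ⊆ K ∪ K') (hKK' : Disjoint K K')
    (hfr : ∀ y ∉ A, frontier (connectedComponentIn Aᶜ y) ⊆ K ∨
      frontier (connectedComponentIn Aᶜ y) ⊆ K') :
    IsOpen (K ∪ {y | y ∉ A ∧ frontier (connectedComponentIn Aᶜ y) ⊆ K}) := by
  rw [isOpen_iff_forall_mem_open]
  rintro x (hxK | ⟨hx, hxfr⟩)
  · refine ⟨connectedComponentIn K'ᶜ x, fun y hy => ?_, hK'.isOpen_compl.connectedComponentIn,
      mem_connectedComponentIn (hKK'.notMem_of_mem_left hxK)⟩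
    have hyK' : y ∉ K' := connectedComponentIn_subset _ _ hy
    by_cases hyA : y ∈ A
    · exact Or.inl ((hAK hyA).resolve_right hyK')
    · exact Or.inr ⟨hyA, (hfr y hyA).resolve_right
        (not_frontier_connectedComponentIn_subset (hKA hxK) hy hyA)⟩
  · refine ⟨connectedComponentIn Aᶜ x, fun y hy => Or.inr ⟨connectedComponentIn_subset _ _ hy, ?_⟩,
      hA.isOpen_compl.connectedComponentIn, mem_connectedComponentIn hx⟩
    rwa [← connectedComponentIn_eq hy]

theorem exists_frontier_connectedComponentIn_not_subset_of_disjoint [ConnectedSpace X]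
    {K K' : Set X} (hK : IsClosed K) (hK' : IsClosed K') (hKK' : Disjoint K K')
    (hKne : K.Nonempty) (hK'ne : K'.Nonempty) :
    ∃ y ∉ K ∪ K', ¬ frontier (connectedComponentIn (K ∪ K')ᶜ y) ⊆ K ∧
      ¬ frontier (connectedComponentIn (K ∪ K')ᶜ y) ⊆ K' := by
  set A := K ∪ K'
  -- otherwise each piece, together with the regions whose frontier it contains, is open
  by_contra! hfr
  replace hfr : ∀ y ∉ A, frontier (connectedComponentIn Aᶜ y) ⊆ K ∨
      frontier (connectedComponentIn Aᶜ y) ⊆ K' := fun y hy => or_iff_not_imp_left.2 (hfr y hy)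
  have hA : IsClosed A := hK.union hK'
  obtain ⟨z, -, hz, hz'⟩ := isPreconnected_univ _ _
    (isOpen_union_setOf_frontier_subset hA hK' subset_union_left subset_rfl hKK' hfr)
    (isOpen_union_setOf_frontier_subset hA hK subset_union_right (union_comm K K').le hKK'.symm
      fun y hy => (hfr y hy).symm)
    (fun z _ => by
      by_cases hz : z ∈ A
      · exact hz.imp Or.inl Or.inl
      · exact (hfr z hz).imp (fun h => Or.inr ⟨hz, h⟩) (fun h => Or.inr ⟨hz, h⟩))
    (by simpa using hKne.mono subset_union_left) (by simpa using hK'ne.mono subset_union_left)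
  rcases hz with hzK | ⟨hzA, hzfr⟩
  · rcases hz' with hzK' | ⟨hzA, -⟩
    exacts [hKK'.notMem_of_mem_left hzK hzK', hzA (Or.inl hzK)]
  rcases hz' with hzK' | ⟨-, hzfr'⟩
  · exact hzA (Or.inr hzK')
  -- a region with empty frontier would be the whole space
  have hempty : frontier (connectedComponentIn Aᶜ z) = ∅ :=
    subset_empty_iff.1 fun x hx => hKK'.notMem_of_mem_left (hzfr hx) (hzfr' hx)
  obtain ⟨k, hk⟩ := hKne
  have huniv := (frontier_eq_empty_iff.1 hempty).resolve_left
    (nonempty_iff_ne_empty.1 ⟨z, mem_connectedComponentIn hzA⟩)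
  exact connectedComponentIn_subset Aᶜ z (huniv ▸ mem_univ k) (Or.inl hk)

end Regions

open Fin.NatCast in
theorem Fin.forall_of_forall_imp_add_one {n : ℕ} {p : Fin (n + 1) → Prop}
    (h : ∀ i, p i → p (i + 1)) {i : Fin (n + 1)} (hi : p i) (j : Fin (n + 1)) : p j := by
  have hk : ∀ k : ℕ, p (i + k) := by
    intro k
    induction k with
    | zero => simpa using hi
    | succ k ih => simpa [add_assoc] using h _ ih
  simpa [Fin.cast_val_eq_self] using hk (j - i).val

namespace MultiDigraph

variable {V E : Type} (G : MultiDigraph V E)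

def IsClosedWalk {n : ℕ} (c : Fin (n + 1) → E) : Prop :=
  ∀ i, G.tgt (c i) = G.src (c (i + 1))

variable {G}

theorem IsClosedWalk.src_mem {n : ℕ} {c : Fin (n + 1) → E} (hc : G.IsClosedWalk c) {R : Set V}
    (hR : ∀ e, G.src e ∈ R → G.tgt e ∈ R) {i : Fin (n + 1)} (hi : G.src (c i) ∈ R)
    (j : Fin (n + 1)) : G.src (c j) ∈ R :=
  Fin.forall_of_forall_imp_add_one (p := fun i => G.src (c i) ∈ R)
    (fun i h => hc i ▸ hR _ h) hi j

end MultiDigraph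

theorem one_lt_rank_euclideanSpace_fin {n : ℕ} (hn : 1 < n) :
    1 < Module.rank ℝ (EuclideanSpace ℝ (Fin n)) := by
  rw [← Module.finrank_eq_rank, finrank_euclideanSpace_fin]
  exact_mod_cast hn

instance : ConnectedSpace Sphere2 :=
  Subtype.connectedSpace <|
    isConnected_sphere (one_lt_rank_euclideanSpace_fin (by norm_num)) _ zero_le_one

instance : LocallyConnectedSpace Sphere2 :=
  ChartedSpace.locallyConnectedSpace (EuclideanSpace ℝ (Fin 2)) _

namespace SphereEmbedding

variable {V E : Type} {G : MultiDigraph V E} (emb : SphereEmbedding G)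

def arc (e : E) : Set Sphere2 :=
  range (emb.emap e)

def FacesBoundedByClosedWalks : Prop :=
  ∀ x ∉ emb.image, ∃ (n : ℕ) (c : Fin (n + 1) → E), G.IsClosedWalk c ∧
    frontier (connectedComponentIn emb.imageᶜ x) = ⋃ i, emb.arc (c i)

theorem image_eq : emb.image = range emb.vmap ∪ ⋃ e, emb.arc e := rfl

theorem isClosed_arc (e : E) : IsClosed (emb.arc e) :=
  (isCompact_range (emb.emap e).continuous).isClosed

theorem interior_arc (e : E) : interior (emb.arc e) = ∅ :=
  interior_range_eq_empty_of_arc (one_lt_rank_euclideanSpace_fin (n := 2) (by norm_num))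
    (emb.emap e).continuous (emb.emap_inj e)

theorem isClosed_image [Finite V] [Finite E] : IsClosed emb.image :=
  (finite_range _).isClosed.union (isClosed_iUnion_of_finite emb.isClosed_arc)

theorem interior_image [Finite V] [Finite E] : interior emb.image = ∅ := by
  rw [image_eq, interior_union_isClosed_of_interior_empty (finite_range _).isClosed
    (interior_iUnion_eq_empty_of_isClosed emb.isClosed_arc emb.interior_arc),
    ← iUnion_singleton_eq_range]
  exact interior_iUnion_eq_empty_of_isClosed (fun _ => isClosed_singleton)
    fun _ => interior_singleton_eq_empty_of_one_lt_rank
      (one_lt_rank_euclideanSpace_fin (n := 2) (by norm_num)) _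

theorem eq_src_or_eq_tgt_of_emap_eq_vmap {e : E} {t : unitInterval} {w : V}
    (h : emb.emap e t = emb.vmap w) : w = G.src e ∨ w = G.tgt e := by
  by_cases ht0 : t = 0
  · exact Or.inl (emb.vmap_inj (by rw [← h, ht0, emb.emap_zero]))
  by_cases ht1 : t = 1
  · exact Or.inr (emb.vmap_inj (by rw [← h, ht1, emb.emap_one]))
  exact absurd ⟨w, h.symm⟩ (emb.emap_interior e t ht0 ht1)

theorem emap_notMem_arc {e f : E} (hef : e ≠ f) {s : unitInterval} (hs0 : s ≠ 0) (hs1 : s ≠ 1) :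
    emb.emap e s ∉ emb.arc f := fun ⟨t, ht⟩ =>
  emb.emap_interior e s hs0 hs1 (emb.emap_disjoint e f hef s t ht.symm)

def side (R : Set V) : Set Sphere2 :=
  emb.vmap '' R ∪ ⋃ (e) (_ : G.src e ∈ R), emb.arc e

theorem isClosed_side [Finite V] [Finite E] (R : Set V) : IsClosed (emb.side R) :=
  (R.toFinite.image _).isClosed.union
    (isClosed_iUnion_of_finite fun e => isClosed_iUnion_of_finite fun _ => emb.isClosed_arc e)

theorem arc_subset_side {R : Set V} {e : E} (he : G.src e ∈ R) : emb.arc e ⊆ emb.side R :=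
  subset_union_right.trans' (subset_iUnion₂ (s := fun e _ => emb.arc e) e he)

theorem vmap_mem_side {R : Set V} {w : V} (hw : w ∈ R) : emb.vmap w ∈ emb.side R :=
  Or.inl (mem_image_of_mem _ hw)

theorem side_subset_image (R : Set V) : emb.side R ⊆ emb.image :=
  union_subset_union (image_subset_range _ _) (iUnion₂_subset fun e _ => subset_iUnion emb.arc e)

theorem image_eq_side_union_side_compl (R : Set V) :
    emb.image = emb.side R ∪ emb.side Rᶜ := by
  refine (union_subset ?_ (iUnion_subset fun e => ?_)).antisymm
    (union_subset (emb.side_subset_image R) (emb.side_subset_image Rᶜ))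
  · rintro _ ⟨w, rfl⟩
    by_cases hw : w ∈ R
    exacts [Or.inl (emb.vmap_mem_side hw), Or.inr (emb.vmap_mem_side hw)]
  · by_cases he : G.src e ∈ R
    exacts [subset_union_left.trans' (emb.arc_subset_side he),
      subset_union_right.trans' (emb.arc_subset_side (R := Rᶜ) he)]

theorem mem_of_vmap_mem_side {R : Set V} (hR : ∀ e, G.src e ∈ R → G.tgt e ∈ R) {w : V}
    (hw : emb.vmap w ∈ emb.side R) : w ∈ R := by
  rcases hw with ⟨w', hw', heq⟩ | hw
  · exact emb.vmap_inj heq ▸ hw'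
  obtain ⟨e, he, t, ht⟩ := mem_iUnion₂.1 hw
  rcases emb.eq_src_or_eq_tgt_of_emap_eq_vmap ht with rfl | rfl
  exacts [he, hR e he]

theorem disjoint_side {R : Set V} (hR : ∀ e, G.src e ∈ R ↔ G.tgt e ∈ R) :
    Disjoint (emb.side R) (emb.side Rᶜ) := by
  rw [disjoint_left]
  intro z hz hz'
  by_cases hzv : z ∈ range emb.vmap
  · obtain ⟨w, rfl⟩ := hzv
    exact emb.mem_of_vmap_mem_side (fun e => mt (hR e).2) hz'
      (emb.mem_of_vmap_mem_side (fun e => (hR e).1) hz)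
  -- off the vertices, a point of both sides would lie on two distinct arcs
  obtain ⟨e, he, s, rfl⟩ := mem_iUnion₂.1 (hz.resolve_left fun h => hzv (image_subset_range _ _ h))
  obtain ⟨f, hf, t, hft⟩ := mem_iUnion₂.1 (hz'.resolve_left fun h => hzv (image_subset_range _ _ h))
  exact hzv (emb.emap_disjoint e f (fun h => hf (h ▸ he)) s t hft.symm)

namespace FacesBoundedByClosedWalks

variable {emb} [Finite V] [Finite E] (hfaces : emb.FacesBoundedByClosedWalks)
include hfaces

theorem exists_isClosedWalk_mem (e : E) :
    ∃ (n : ℕ) (c : Fin (n + 1) → E), G.IsClosedWalk c ∧ e ∈ range c := by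
  let s : unitInterval := ⟨1 / 2, by norm_num, by norm_num⟩
  have hs0 : s ≠ 0 := fun h => by have := congrArg Subtype.val h; norm_num [s] at this
  have hs1 : s ≠ 1 := fun h => by have := congrArg Subtype.val h; norm_num [s] at this
  obtain ⟨y, hy, hyfr⟩ := exists_frontier_connectedComponentIn_not_subset
    (isClosed_iUnion_of_finite fun f : {f // f ≠ e} => emb.isClosed_arc f.1) emb.interior_image
    (Or.inr (mem_iUnion.2 ⟨e, s, rfl⟩) : emb.emap e s ∈ emb.image)
    (by simpa [mem_iUnion] using fun f hf => emb.emap_notMem_arc (Ne.symm hf) hs0 hs1)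
  obtain ⟨n, c, hc, hfr⟩ := hfaces y hy
  refine ⟨n, c, hc, by_contra fun he => hyfr (hfr ▸ iUnion_subset fun i => ?_)⟩
  exact subset_iUnion_of_subset ⟨c i, fun h => he ⟨i, h⟩⟩ subset_rfl

theorem src_mem_of_tgt_mem {R : Set V} (hR : ∀ e, G.src e ∈ R → G.tgt e ∈ R) {e : E}
    (he : G.tgt e ∈ R) : G.src e ∈ R := by
  obtain ⟨n, c, hc, i, rfl⟩ := hfaces.exists_isClosedWalk_mem e
  exact hc.src_mem hR (hc i ▸ he) i

theorem eq_univ {R : Set V} (hR : ∀ e, G.src e ∈ R ↔ G.tgt e ∈ R) (hne : R.Nonempty) :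
    R = univ := by
  by_contra hR'
  obtain ⟨u, hu⟩ := hne
  obtain ⟨v, hv⟩ := (ne_univ_iff_exists_notMem R).1 hR'
  obtain ⟨y, hy, hyR, hyRc⟩ := exists_frontier_connectedComponentIn_not_subset_of_disjoint
    (emb.isClosed_side R) (emb.isClosed_side Rᶜ) (emb.disjoint_side hR)
    ⟨_, emb.vmap_mem_side hu⟩ ⟨_, emb.vmap_mem_side (R := Rᶜ) hv⟩
  rw [← image_eq_side_union_side_compl] at hy hyR hyRc
  obtain ⟨n, c, hc, hfr⟩ := hfaces y hy
  rw [hfr] at hyR hyRc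
  by_cases h0 : G.src (c 0) ∈ R
  · exact hyR (iUnion_subset fun i => emb.arc_subset_side (hc.src_mem (fun e => (hR e).1) h0 i))
  · exact hyRc (iUnion_subset fun i =>
      emb.arc_subset_side (R := Rᶜ) (hc.src_mem (fun e => mt (hR e).2) h0 i))

end FacesBoundedByClosedWalks

end SphereEmbedding

/-- **Cycle boundaries imply O-connectivity.**  Let `G` be a finite planar
digraph embedded in the 2-sphere such that the boundary of every region
(connected component of the complement of the embedded graph) is a directed
cycle.  Then `G` is `O`-connected: for any two vertices `u`, `v` there is a
directed path from `u` to `v`. -/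
theorem oConnected_of_cycle_boundaries {V E : Type} [Fintype V] [Fintype E]
    (G : MultiDigraph V E) (emb : SphereEmbedding G)
    (hregions : ∀ x : Sphere2, x ∉ emb.image →
      ∃ (n : ℕ) (c : Fin (n + 1) → E), Function.Injective c ∧
        (∀ i : Fin (n + 1), G.tgt (c i) = G.src (c (i + 1))) ∧
        frontier (connectedComponentIn emb.imageᶜ x) =
          ⋃ i : Fin (n + 1), Set.range fun t => emb.emap (c i) t) :
    G.OConnected := by
  have hfaces : emb.FacesBoundedByClosedWalks := fun x hx => by
    obtain ⟨n, c, -, hc, hfr⟩ := hregions x hx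
    exact ⟨n, c, hc, hfr⟩
  intro u v
  let R : Set V := {w | G.reach univ u w}
  have hfwd : ∀ e, G.src e ∈ R → G.tgt e ∈ R := fun e he => he.tail ⟨e, trivial, rfl, rfl⟩
  have hR : R = univ := hfaces.eq_univ (fun e => ⟨hfwd e, hfaces.src_mem_of_tgt_mem hfwd⟩)
    ⟨u, Relation.ReflTransGen.refl⟩
  exact eq_univ_iff_forall.1 hR v
end

section
/- Let G be a finite digraph with no loops, and fix a vertex v0 of G. Suppose there is a directed spanning subtree T of G with origin v0, let w be a leaf of T, and let n be the in-degree of w in G. Then G has at least n directed spanning subtrees with origin v0. -/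
/-!
Each edge `e` into the leaf `w` gives a spanning tree of its own: remove the tree edge into `w`
and put `e` in its place. Since no tree edge leaves `w`, no tree path passes through `w`, so
every other vertex, in particular `src e ≠ w`, is still reached from the origin; and distinct
edges `e` give distinct trees, as `e` is the only edge into `w` of the new tree.
-/

namespace MultiDigraph

variable {V E : Type} (G : MultiDigraph V E)

def replaceInEdge (T : Set E) (w : V) (e : E) : Set E :=
  insert e {f ∈ T | G.tgt f ≠ w}

theorem reach_mono {T T' : Set E} (h : T ⊆ T') {a b : V} (hab : G.reach T a b) :
    G.reach T' a b :=
  Relation.ReflTransGen.mono (fun _ _ ⟨e, he, hs, ht⟩ => ⟨e, h he, hs, ht⟩) _ _ hab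

theorem eq_of_reach_of_leaf {T : Set E} {w x : V} (hleaf : ∀ e ∈ T, G.src e ≠ w)
    (h : G.reach T w x) : x = w := by
  rcases Relation.ReflTransGen.cases_head h with rfl | ⟨_, ⟨e, he, hs, -⟩, -⟩
  · rfl
  · exact absurd hs (hleaf e he)

theorem eq_or_reach_of_leaf {T : Set E} {w a x : V} (hleaf : ∀ e ∈ T, G.src e ≠ w)
    (h : G.reach T a x) : x = w ∨ G.reach {f ∈ T | G.tgt f ≠ w} a x := by
  induction h with
  | refl => exact Or.inr .refl
  | tail _ hstep ih =>
    obtain ⟨f, hfT, hfs, hft⟩ := hstep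
    rcases ih with rfl | hreach
    · exact absurd hfs (hleaf f hfT)
    · by_cases hfw : G.tgt f = w
      · exact Or.inl (hft ▸ hfw)
      · exact Or.inr (hreach.tail ⟨f, ⟨hfT, hfw⟩, hfs, hft⟩)

theorem isSpanTree_replaceInEdge {u w : V} {T : Set E} {e : E} (hT : G.IsSpanTree u T)
    (hleaf : ∀ f ∈ T, G.src f ≠ w) (he : G.tgt e = w) (hloop : G.src e ≠ w) :
    G.IsSpanTree u (G.replaceInEdge T w e) := by
  obtain ⟨hroot, hunique, hreach⟩ := hT
  have hwu : w ≠ u := by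
    rintro rfl
    exact hloop (G.eq_of_reach_of_leaf hleaf (hreach _))
  have hsub : {f ∈ T | G.tgt f ≠ w} ⊆ G.replaceInEdge T w e := Set.subset_insert _ _
  refine ⟨?_, fun x hx => ?_, fun x => ?_⟩
  · rintro f (rfl | ⟨hfT, -⟩)
    · exact he ▸ hwu
    · exact hroot f hfT
  · by_cases hxw : x = w
    · subst hxw
      refine ⟨e, ⟨Set.mem_insert _ _, he⟩, ?_⟩
      rintro f ⟨rfl | ⟨-, hfx⟩, hft⟩
      · rfl
      · exact absurd hft hfx
    · obtain ⟨f, ⟨hfT, hfx⟩, hfu⟩ := hunique x hx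
      refine ⟨f, ⟨hsub ⟨hfT, hfx ▸ hxw⟩, hfx⟩, ?_⟩
      rintro g ⟨rfl | ⟨hgT, -⟩, hgx⟩
      · exact absurd (hgx.symm.trans he) hxw
      · exact hfu g ⟨hgT, hgx⟩
  · rcases G.eq_or_reach_of_leaf hleaf (hreach x) with rfl | h
    · have hsrc := (G.eq_or_reach_of_leaf hleaf (hreach (G.src e))).resolve_left hloop
      exact (G.reach_mono hsub hsrc).tail ⟨e, Set.mem_insert _ _, rfl, he⟩
    · exact G.reach_mono hsub h

theorem injOn_replaceInEdge (T : Set E) (w : V) :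
    Set.InjOn (G.replaceInEdge T w) {e | G.tgt e = w} := by
  intro a ha b _ hab
  have ha' : a ∈ G.replaceInEdge T w b := hab ▸ Set.mem_insert a _
  rcases ha' with h | ⟨-, hne⟩
  · exact h
  · exact absurd ha hne

end MultiDigraph

theorem indegree_leaf_le_treeCount_general {V E : Type} [Finite E]
    (G : MultiDigraph V E) (hnoloop : ∀ e : E, G.src e ≠ G.tgt e)
    (v₀ : V) (T : Set E) (hT : G.IsSpanTree v₀ T)
    (w : V) (hleaf : ∀ e ∈ T, G.src e ≠ w) :
    {e : E | G.tgt e = w}.ncard ≤ G.treeCount v₀ := by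
  calc {e : E | G.tgt e = w}.ncard
      = (G.replaceInEdge T w '' {e | G.tgt e = w}).ncard :=
        (G.injOn_replaceInEdge T w).ncard_image.symm
    _ ≤ G.treeCount v₀ := by
        refine Set.ncard_le_ncard ?_ (Set.toFinite _)
        rintro _ ⟨e, he, rfl⟩
        exact G.isSpanTree_replaceInEdge hT hleaf he fun h => hnoloop e (h.trans he.symm)

/-- **In-degree of a leaf bounds the number of spanning trees.**
Let `G` be a finite digraph with no loops, `v₀` a vertex of `G`, and suppose
`T` is a directed spanning subtree of `G` with origin `v₀`.  If `w` is a leaf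
of `T` (no edge of `T` starts at `w`) and `n` is the in-degree of `w` in `G`,
then `G` has at least `n` directed spanning subtrees with origin `v₀`. -/
theorem indegree_leaf_le_treeCount {V E : Type} [Finite V] [Finite E]
    (G : MultiDigraph V E) (hnoloop : ∀ e : E, G.src e ≠ G.tgt e)
    (v₀ : V) (T : Set E) (hT : G.IsSpanTree v₀ T)
    (w : V) (hleaf : ∀ e ∈ T, G.src e ≠ w) :
    {e : E | G.tgt e = w}.ncard ≤ G.treeCount v₀ :=
  indegree_leaf_le_treeCount_general G hnoloop v₀ T hT w hleaf
end

section
/- (Menger-type theorem for digraphs) Let G be a (possibly infinite) digraph, A a set of vertices of G, and v_B a vertex of G not in A. Then either there are two edge-disjoint directed paths from A to v_B, or there is a partition of the vertices of G into sets A' and B' with A contained in A', v_B in B', and at most one edge of G directed from A' to B'. -/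
/-- A directed path in a digraph `G`: a sequence of `n + 1` vertices joined
consecutively by `n` edges, each oriented head-to-tail. -/
structure DirPath {V E : Type} (G : MultiDigraph V E) where
  n : ℕ
  verts : Fin (n + 1) → V
  edges : Fin n → E
  src_eq : ∀ i : Fin n, G.src (edges i) = verts i.castSucc
  tgt_eq : ∀ i : Fin n, G.tgt (edges i) = verts i.succ

/-- A directed path is simple if it repeats no vertex. -/
def DirPath.Simple {V E : Type} {G : MultiDigraph V E} (p : DirPath G) : Prop :=
  Function.Injective p.verts

/-- An `(A, b)`-path: a simple directed path beginning at a vertex of `A` and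
ending at `b`, which does not meet `A ∪ {b}` in its interior. -/
def IsABPath {V E : Type} (G : MultiDigraph V E) (A : Set V) (b : V)
    (p : DirPath G) : Prop :=
  p.Simple ∧ p.verts 0 ∈ A ∧ p.verts (Fin.last p.n) = b ∧
  ∀ i : Fin (p.n + 1), i ≠ 0 → i ≠ Fin.last p.n →
    p.verts i ∉ A ∧ p.verts i ≠ b

/-!
Ford–Fulkerson with unit capacities, run for two rounds. A flow of value `k` is a finite edge set
`F` whose net inflow vanishes outside `A`, except at `v_B` where it is `k`. Starting from `F = ∅`,
either a vertex-simple path in the residual graph of `F` leads from `A` to `v_B`, and flipping its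
edges in `F` gives a flow of value `k + 1`; or the set `R` of vertices residually reachable from
`A` is a cut: every edge leaving `R` lies in `F` and no edge of `F` enters `R`, so summing the net
inflow over the endpoints of `F` outside `R` shows that at most `k` edges leave `R`. A flow of
value `2` splits into two edge-disjoint walks from `A` to `v_B`, which shorten to
`(A, v_B)`-paths.
-/

open Relation List

theorem List.exists_nodup_isChain_cons_of_relationReflTransGen {α : Type*} {r : α → α → Prop}
    {a b : α} (h : ReflTransGen r a b) :
    ∃ l, IsChain r (a :: l) ∧ (a :: l).Nodup ∧ (a :: l).getLast (cons_ne_nil _ _) = b := by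
  induction h using Relation.ReflTransGen.head_induction_on with
  | refl => exact ⟨[], .singleton _, nodup_singleton _, rfl⟩
  | @head a c hac _ ih =>
    obtain ⟨l, hl, hnd, hlast⟩ := ih
    by_cases ha : a ∈ c :: l
    · obtain ⟨s, t, hst⟩ := append_of_mem ha
      rw [hst] at hl hnd
      refine ⟨t, hl.right_of_append, hnd.sublist (sublist_append_right _ _), ?_⟩
      simpa [hst, getLast_append_of_ne_nil] using hlast
    · exact ⟨c :: l, isChain_cons_cons.2 ⟨hac, hl⟩, nodup_cons.2 ⟨ha, hnd⟩, by simpa using hlast⟩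

theorem Relation.ReflTransGen.exists_last_mem {α : Type*} {r : α → α → Prop} {A : Set α}
    {a b : α} (ha : a ∈ A) (h : ReflTransGen r a b) :
    ∃ a' ∈ A, ReflTransGen (fun x y => r x y ∧ y ∉ A) a' b := by
  induction h with
  | refl => exact ⟨a, ha, .refl⟩
  | @tail c d _ hcd ih =>
    by_cases hd : d ∈ A
    · exact ⟨d, hd, .refl⟩
    · obtain ⟨a', ha', h⟩ := ih
      exact ⟨a', ha', h.tail ⟨hcd, hd⟩⟩

namespace MultiDigraph

variable {V E : Type} {G : MultiDigraph V E}

theorem step_mono {T T' : Set E} (h : T ⊆ T') {a b : V} : G.step T a b → G.step T' a b :=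
  fun ⟨e, he, hab⟩ => ⟨e, h he, hab⟩

theorem exists_isABPath_of_isChain {A : Set V} {T : Set E} {a : V} {l : List V} (ha : a ∈ A)
    (hchain : IsChain (fun x y => G.step T x y ∧ y ∉ A) (a :: l)) (hnd : (a :: l).Nodup) :
    ∃ p : DirPath G, IsABPath G A ((a :: l).getLast (cons_ne_nil _ _)) p ∧
      Set.range p.edges ⊆ T := by
  have hstep (i : Fin l.length) :
      G.step T ((a :: l).get i.castSucc) ((a :: l).get i.succ) ∧ (a :: l).get i.succ ∉ A :=
    hchain.getElem i (by simp)
  choose edges hedgesT hsrc htgt using fun i => (hstep i).1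
  have hverts := nodup_iff_injective_get.1 hnd
  refine ⟨⟨l.length, (a :: l).get, edges, hsrc, htgt⟩, ⟨hverts, ha, ?_, ?_⟩, ?_⟩
  · simp [getLast_eq_getElem]
  · intro i hi0 hilast
    obtain ⟨j, rfl⟩ := Fin.exists_succ_eq.2 hi0
    exact ⟨(hstep j).2, fun h => hilast (hverts (h.trans (by simp [getLast_eq_getElem])))⟩
  · rintro _ ⟨i, rfl⟩
    exact hedgesT i

theorem exists_isABPath_of_reflTransGen {A : Set V} {T : Set E} {a b : V} (ha : a ∈ A)
    (h : ReflTransGen (G.step T) a b) :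
    ∃ p : DirPath G, IsABPath G A b p ∧ Set.range p.edges ⊆ T := by
  obtain ⟨a', ha', h'⟩ := h.exists_last_mem ha
  obtain ⟨l, hchain, hnd, rfl⟩ := exists_nodup_isChain_cons_of_relationReflTransGen h'
  exact exists_isABPath_of_isChain ha' hchain hnd

section Flow

open Classical

variable (G) in
noncomputable def netIn (S : Finset E) (v : V) : ℤ :=
  ∑ e ∈ S, ((if G.tgt e = v then 1 else 0) - (if G.src e = v then 1 else 0))

theorem netIn_insert {S : Finset E} {e : E} (he : e ∉ S) (v : V) :
    G.netIn (insert e S) v =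
      G.netIn S v + ((if G.tgt e = v then 1 else 0) - (if G.src e = v then 1 else 0)) := by
  rw [netIn, Finset.sum_insert he, add_comm]; rfl

theorem netIn_erase {S : Finset E} {e : E} (he : e ∈ S) (v : V) :
    G.netIn (S.erase e) v =
      G.netIn S v - ((if G.tgt e = v then 1 else 0) - (if G.src e = v then 1 else 0)) := by
  rw [netIn, Finset.sum_erase_eq_sub he]; rfl

theorem netIn_sdiff {S P : Finset E} (h : P ⊆ S) (v : V) :
    G.netIn (S \ P) v = G.netIn S v - G.netIn P v :=
  Finset.sum_sdiff_eq_sub h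

theorem exists_tgt_eq_of_netIn_pos {S : Finset E} {v : V} (h : 0 < G.netIn S v) :
    ∃ e ∈ S, G.tgt e = v := by
  by_contra! hS
  refine h.not_ge (Finset.sum_nonpos fun e he => ?_)
  rw [if_neg (hS e he), zero_sub, neg_nonpos]
  positivity

theorem exists_reflTransGen_of_netIn (A : Set V) (S : Finset E) {c : V}
    (hc : c ∉ A → 0 < G.netIn S c) (hS : ∀ v ∉ A, v ≠ c → 0 ≤ G.netIn S v) :
    ∃ a ∈ A, ∃ P ⊆ S, ReflTransGen (G.step ↑P) a c ∧
      ∀ v, G.netIn P v = (if c = v then 1 else 0) - (if a = v then 1 else 0) := by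
  induction S using Finset.strongInduction generalizing c with
  | H S ih =>
  by_cases hcA : c ∈ A
  · exact ⟨c, hcA, ∅, Finset.empty_subset _, .refl, fun v => by simp [netIn]⟩
  obtain ⟨e, he, rfl⟩ := exists_tgt_eq_of_netIn_pos (hc hcA)
  have hin : 0 < G.netIn S (G.tgt e) := hc hcA
  -- Removing `e` moves one unit of surplus inflow from `c` to `G.src e`.
  obtain ⟨a, ha, P, hPS, hP, hnet⟩ := ih (S.erase e) (Finset.erase_ssubset he) (c := G.src e)
    (fun hsrc => by
      rw [netIn_erase he, if_pos rfl]
      by_cases h : G.tgt e = G.src e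
      · rw [if_pos h, ← h]; omega
      · rw [if_neg h]; have := hS _ hsrc (Ne.symm h); omega)
    (fun v hv hne => by
      rw [netIn_erase he, if_neg (Ne.symm hne)]
      by_cases h : G.tgt e = v
      · subst h; rw [if_pos rfl]; omega
      · rw [if_neg h]; have := hS v hv (Ne.symm h); omega)
  have heP : e ∉ P := fun h => Finset.notMem_erase e S (hPS h)
  refine ⟨a, ha, insert e P, Finset.insert_subset he (hPS.trans (Finset.erase_subset e S)), ?_,
    fun v => ?_⟩
  · have hPe : G.step ↑P ≤ G.step ↑(insert e P) :=
      fun _ _ => step_mono (Finset.coe_subset.2 (Finset.subset_insert e P))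
    exact (ReflTransGen.mono hPe _ _ hP).tail ⟨e, Finset.mem_insert_self e P, rfl, rfl⟩
  · rw [netIn_insert heP, hnet]; ring

variable (G) in
/-- A flow with unit capacities is given by its support `F`. -/
def IsFlow (A : Set V) (b : V) (F : Finset E) (k : ℕ) : Prop :=
  ∀ v ∉ A, G.netIn F v = if b = v then (k : ℤ) else 0

variable (G) in
def residual (F : Finset E) (a b : V) : Prop :=
  G.step (↑F)ᶜ a b ∨ G.step ↑F b a

theorem card_crossing_eq_sum_netIn {F : Finset E} {R : Set V}
    (hR : ∀ e ∈ F, G.tgt e ∈ R → G.src e ∈ R) :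
    ((F.filter fun e => G.src e ∈ R ∧ G.tgt e ∉ R).card : ℤ) =
      ∑ v ∈ (F.image G.src ∪ F.image G.tgt).filter (· ∉ R), G.netIn F v := by
  simp only [netIn]
  rw [Finset.sum_comm, Finset.natCast_card_filter]
  refine Finset.sum_congr rfl fun e he => ?_
  have hsrc : G.src e ∈ F.image G.src ∪ F.image G.tgt :=
    Finset.mem_union_left _ (Finset.mem_image_of_mem _ he)
  have htgt : G.tgt e ∈ F.image G.src ∪ F.image G.tgt :=
    Finset.mem_union_right _ (Finset.mem_image_of_mem _ he)
  rw [Finset.sum_sub_distrib, Finset.sum_ite_eq, Finset.sum_ite_eq]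
  simp only [Finset.mem_filter, hsrc, htgt, true_and]
  have := hR e he
  by_cases hs : G.src e ∈ R <;> by_cases ht : G.tgt e ∈ R <;> simp_all

theorem IsFlow.encard_crossing_le {A : Set V} {b : V} {F : Finset E} {k : ℕ}
    (hF : G.IsFlow A b F k) {R : Set V} (hAR : A ⊆ R)
    (hR : ∀ x ∈ R, ∀ y, G.residual F x y → y ∈ R) :
    {e | G.src e ∈ R ∧ G.tgt e ∉ R}.encard ≤ k := by
  have hcross : {e | G.src e ∈ R ∧ G.tgt e ∉ R} =
      ↑(F.filter fun e => G.src e ∈ R ∧ G.tgt e ∉ R) := by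
    ext e
    rw [Finset.coe_filter]
    exact ⟨fun h => ⟨by_contra fun he => h.2 (hR _ h.1 _ (Or.inl ⟨e, he, rfl, rfl⟩)), h⟩,
      fun h => h.2⟩
  have hcard := card_crossing_eq_sum_netIn fun e he ht => hR _ ht _ (Or.inr ⟨e, he, rfl, rfl⟩)
  have hsum : ∑ v ∈ (F.image G.src ∪ F.image G.tgt).filter (· ∉ R), G.netIn F v ≤ k := by
    have hA : ∀ v ∈ (F.image G.src ∪ F.image G.tgt).filter (· ∉ R), v ∉ A :=
      fun v hv hvA => (Finset.mem_filter.1 hv).2 (hAR hvA)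
    rw [Finset.sum_congr rfl fun v hv => hF v (hA v hv), Finset.sum_ite_eq]
    split_ifs <;> simp
  rw [hcross, Set.encard_coe_eq_coe_finsetCard]
  exact_mod_cast hcard.trans_le hsum

variable (G) in
/-- The invariant of augmenting `F` along a vertex-simple residual path: `W` holds the vertices
already traversed, and `S` differs from `F` only by edges out of or into `W`. -/
def EditedAt (F S : Finset E) (W : Set V) : Prop :=
  (∀ e ∈ S, e ∉ F → G.src e ∈ W) ∧ (∀ e ∈ F, e ∉ S → G.tgt e ∈ W)

theorem EditedAt.exists_of_residual {F S : Finset E} {W : Set V} (hS : G.EditedAt F S W)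
    {c c' : V} (hc : c ∉ W) (h : G.residual F c c') :
    ∃ S', G.EditedAt F S' (insert c W) ∧
      ∀ v, G.netIn S' v = G.netIn S v + ((if c' = v then 1 else 0) - (if c = v then 1 else 0)) := by
  rcases h with ⟨e, heF, rfl, rfl⟩ | ⟨e, heF, rfl, rfl⟩
  · have heS : e ∉ S := fun h => hc (hS.1 e h heF)
    refine ⟨insert e S, ⟨fun e' he' he'F => ?_, fun e' he'F he'S => ?_⟩, netIn_insert heS⟩
    · rcases Finset.mem_insert.1 he' with rfl | he'
      · exact Set.mem_insert _ _
      · exact Set.mem_insert_of_mem _ (hS.1 e' he' he'F)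
    · exact Set.mem_insert_of_mem _ (hS.2 e' he'F fun h => he'S (Finset.mem_insert_of_mem h))
  · have heS : e ∈ S := by_contra fun h => hc (hS.2 e heF h)
    refine ⟨S.erase e, ⟨fun e' he' he'F => ?_, fun e' he'F he'S => ?_⟩,
      fun v => by rw [netIn_erase heS]; ring⟩
    · exact Set.mem_insert_of_mem _ (hS.1 e' (Finset.mem_of_mem_erase he') he'F)
    · by_cases he' : e' = e
      · rw [he']; exact Set.mem_insert _ _
      · exact Set.mem_insert_of_mem _ (hS.2 e' he'F fun h => he'S (Finset.mem_erase.2 ⟨he', h⟩))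

theorem EditedAt.exists_of_isChain_residual {F : Finset E} {l : List V} :
    ∀ {c : V} {S : Finset E} {W : Set V}, G.EditedAt F S W → IsChain (G.residual F) (c :: l) →
      (c :: l).Nodup → (∀ x ∈ c :: l, x ∉ W) →
      ∃ S', ∀ v, G.netIn S' v = G.netIn S v +
        ((if (c :: l).getLast (cons_ne_nil _ _) = v then 1 else 0) - (if c = v then 1 else 0)) := by
  induction l with
  | nil =>
    intro c S W _ _ _ _
    exact ⟨S, fun v => by rw [getLast_singleton, sub_self, add_zero]⟩
  | cons c' l ih =>
    intro c S W hS hchain hnd hW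
    rw [isChain_cons_cons] at hchain
    rw [nodup_cons] at hnd
    obtain ⟨S₁, hS₁, hnet₁⟩ := hS.exists_of_residual (hW c mem_cons_self) hchain.1
    obtain ⟨S', hnet'⟩ := ih hS₁ hchain.2 hnd.2 fun x hx hxW => by
      rcases Set.mem_insert_iff.1 hxW with rfl | hxW
      · exact hnd.1 hx
      · exact hW x (mem_cons_of_mem _ hx) hxW
    exact ⟨S', fun v => by rw [hnet', hnet₁, getLast_cons (cons_ne_nil _ _)]; ring⟩

theorem IsFlow.exists_succ_or_cut {A : Set V} {b : V} {F : Finset E} {k : ℕ}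
    (hF : G.IsFlow A b F k) :
    (∃ F', G.IsFlow A b F' (k + 1)) ∨
      ∃ R : Set V, A ⊆ R ∧ b ∉ R ∧ {e | G.src e ∈ R ∧ G.tgt e ∉ R}.encard ≤ k := by
  by_cases hb : ∃ a ∈ A, ReflTransGen (G.residual F) a b
  · obtain ⟨a, ha, h⟩ := hb
    obtain ⟨l, hchain, hnd, hlast⟩ := exists_nodup_isChain_cons_of_relationReflTransGen h
    obtain ⟨F', hF'⟩ := EditedAt.exists_of_isChain_residual
      (⟨fun _ h h' => absurd h h', fun _ h h' => absurd h h'⟩ : G.EditedAt F F ∅) hchain hnd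
      fun x _ => Set.notMem_empty x
    refine Or.inl ⟨F', fun v hv => ?_⟩
    rw [hF', hF v hv, hlast, if_neg (ne_of_mem_of_not_mem ha hv)]
    split_ifs <;> simp
  · exact Or.inr ⟨{v | ∃ a ∈ A, ReflTransGen (G.residual F) a v}, fun a ha => ⟨a, ha, .refl⟩, hb,
      hF.encard_crossing_le (fun a ha => ⟨a, ha, .refl⟩)
        fun _ ⟨a, ha, hx⟩ _ hxy => ⟨a, ha, hx.tail hxy⟩⟩

theorem IsFlow.exists_reflTransGen_isFlow_sdiff {A : Set V} {b : V} {F : Finset E} {k : ℕ}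
    (hb : b ∉ A) (hF : G.IsFlow A b F (k + 1)) :
    ∃ a ∈ A, ∃ P ⊆ F, ReflTransGen (G.step ↑P) a b ∧ G.IsFlow A b (F \ P) k := by
  obtain ⟨a, ha, P, hPF, hP, hnet⟩ := exists_reflTransGen_of_netIn A F (c := b)
    (fun _ => by rw [hF b hb, if_pos rfl]; positivity)
    fun v hv hne => by rw [hF v hv, if_neg (Ne.symm hne)]
  refine ⟨a, ha, P, hPF, hP, fun v hv => ?_⟩
  rw [netIn_sdiff hPF, hF v hv, hnet, if_neg (ne_of_mem_of_not_mem ha hv)]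
  split_ifs <;> simp

theorem IsFlow.exists_edgeDisjoint_isABPath {A : Set V} {b : V} {F : Finset E} (hb : b ∉ A)
    (hF : G.IsFlow A b F 2) :
    ∃ p q : DirPath G, IsABPath G A b p ∧ IsABPath G A b q ∧
      Disjoint (Set.range p.edges) (Set.range q.edges) := by
  obtain ⟨a₁, ha₁, P₁, -, hP₁, hF'⟩ := hF.exists_reflTransGen_isFlow_sdiff hb
  obtain ⟨a₂, ha₂, P₂, hP₂, hP₂', -⟩ := hF'.exists_reflTransGen_isFlow_sdiff hb
  obtain ⟨p, hp, hpP⟩ := exists_isABPath_of_reflTransGen ha₁ hP₁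
  obtain ⟨q, hq, hqP⟩ := exists_isABPath_of_reflTransGen ha₂ hP₂'
  refine ⟨p, q, hp, hq, Set.disjoint_of_subset hpP hqP ?_⟩
  exact Finset.disjoint_coe.2 (Finset.disjoint_of_subset_right hP₂ Finset.disjoint_sdiff)

end Flow

end MultiDigraph

open MultiDigraph

/-- **Menger's theorem for digraphs.**  Let `G` be a (possibly infinite)
digraph, `A` a set of vertices and `v_B` a vertex not in `A`.  Either there
are two edge-disjoint `(A, v_B)`-paths, or the vertices of `G` can be
partitioned into sets `A'` and `B'` with `A ⊆ A'` and `v_B ∈ B'` such that at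
most one edge of `G` runs from `A'` to `B'`. -/
theorem menger_digraph {V E : Type} (G : MultiDigraph V E)
    (A : Set V) (vB : V) (hvB : vB ∉ A) :
    (∃ p q : DirPath G, IsABPath G A vB p ∧ IsABPath G A vB q ∧
      Disjoint (Set.range p.edges) (Set.range q.edges)) ∨
    (∃ A' B' : Set V, A' ∪ B' = Set.univ ∧ Disjoint A' B' ∧ A ⊆ A' ∧ vB ∈ B' ∧
      {e : E | G.src e ∈ A' ∧ G.tgt e ∈ B'}.Subsingleton) := by
  have hcut : ∀ R : Set V, A ⊆ R → vB ∉ R → {e | G.src e ∈ R ∧ G.tgt e ∉ R}.encard ≤ 1 →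
      ∃ A' B' : Set V, A' ∪ B' = Set.univ ∧ Disjoint A' B' ∧ A ⊆ A' ∧ vB ∈ B' ∧
        {e : E | G.src e ∈ A' ∧ G.tgt e ∈ B'}.Subsingleton :=
    fun R hAR hR h => ⟨R, Rᶜ, Set.union_compl_self R, disjoint_compl_right, hAR, hR,
      fun _ he _ he' => Set.encard_le_one_iff.1 h _ _ he he'⟩
  have hempty : G.IsFlow A vB ∅ 0 := fun v _ => by simp [netIn]
  rcases hempty.exists_succ_or_cut with ⟨F₁, hF₁⟩ | ⟨R, hAR, hR, h⟩
  · rcases hF₁.exists_succ_or_cut with ⟨F₂, hF₂⟩ | ⟨R, hAR, hR, h⟩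
    · exact Or.inl (hF₂.exists_edgeDisjoint_isABPath hvB)
    · exact Or.inr (hcut R hAR hR h)
  · exact Or.inr (hcut R hAR hR (h.trans zero_le_one))
end

section
/- Let D be a reduced diagram of a prime, special, alternating link L, let G be the underlying 4-valent graph of D with the orientation o directing each edge from overcrossing to undercrossing, and let H be the set of edges defined by Crowell's rule. If A : G \to G_H(D) is the map collapsing every Seifert circle contained in H to a point, then for any vertex v of G, A induces a bijection from the set of H-maximal directed spanning subtrees of G with origin v to the set of directed spanning subtrees of G_H(D) with origin A(v). -/
namespace MultiDigraph

variable {V E : Type}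

/-- The digraph obtained from `G` by collapsing every edge of `H` to a point:
vertices joined by edges of `H` (the Seifert circles contained in `H`) are
identified, and the remaining edges are those not in `H`. -/
def collapse (G : MultiDigraph V E) (H : Set E) :
    MultiDigraph (Quot fun a b => ∃ e ∈ H, G.src e = a ∧ G.tgt e = b)
      {e : E // e ∉ H} :=
  ⟨fun f => Quot.mk _ (G.src f.1), fun f => Quot.mk _ (G.tgt f.1)⟩

/-- `T` is an `H`-maximal directed spanning subtree of `G` with origin `v`:
among all directed spanning subtrees with origin `v` it uses as few edges of
`K` (equivalently, as many edges of `H`) as possible. -/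
def IsHMaxSpanTree (G : MultiDigraph V E) (H K : Set E) (v : V)
    (T : Set E) : Prop :=
  G.IsSpanTree v T ∧
  ∀ T' : Set E, G.IsSpanTree v T' → (T ∩ K).ncard ≤ (T' ∩ K).ncard

end MultiDigraph

/-!
Every directed spanning tree `T` of `G` with origin `v` contains, for each Seifert circle of `H`
other than the one through `v`, an edge outside `H` entering it (the last such edge on the
`T`-path to a vertex of that circle). So `T` has at least as many edges in `K` as `G_H(D)` has
vertices besides `A v`. A spanning tree of `G_H(D)` attains this bound once lifted to `G`: enter
each circle along the tree and run around it along `H`. Hence the `H`-maximal trees are those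
whose `K`-edges enter every non-root circle exactly once, i.e. whose `K`-part is a spanning tree
of `G_H(D)`; and since each vertex has a single incoming `H`-edge, a tree is determined by its
`K`-part.
-/

theorem Set.bijOn_of_subset_image_of_ncard_le {α β : Type*} {f : α → β} {s : Set α}
    {t : Set β} (hs : s.Finite) (hst : t ⊆ f '' s) (hcard : s.ncard ≤ t.ncard) :
    Set.BijOn f s t := by
  have himage : f '' s = t :=
    (Set.eq_of_subset_of_ncard_le hst ((Set.ncard_image_le hs).trans hcard) (hs.image f)).symm
  refine ⟨himage ▸ Set.mapsTo_image f s, Set.injOn_of_ncard_image_eq ?_ hs,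
    himage ▸ Set.surjOn_image f s⟩
  exact le_antisymm (Set.ncard_image_le hs) (himage ▸ hcard)

namespace MultiDigraph

variable {V E : Type} {G : MultiDigraph V E}

theorem reach.mono {S T : Set E} {a b : V} (hr : G.reach S a b) (h : S ⊆ T) : G.reach T a b :=
  Relation.ReflTransGen.mono (fun _ _ ⟨e, he, hs, ht⟩ => ⟨e, h he, hs, ht⟩) _ _ hr

def reachIn (G : MultiDigraph V E) (S : Set E) : ℕ → V → V → Prop
  | 0 => Eq
  | n + 1 => fun a c => ∃ b, G.reachIn S n a b ∧ G.step S b c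

theorem exists_reachIn_of_reach {S : Set E} {a b : V} (h : G.reach S a b) :
    ∃ n, G.reachIn S n a b := by
  induction h with
  | refl => exact ⟨0, rfl⟩
  | tail _ hstep ih =>
    obtain ⟨n, hn⟩ := ih
    exact ⟨n + 1, _, hn, hstep⟩

/-- Breadth-first search: every vertex `w ≠ u` is entered by an edge from a vertex strictly
closer to `u`, and choosing one such edge per vertex gives the tree. -/
theorem exists_isSpanTree [Finite V] {S : Set E} {u : V} (h : ∀ w, G.reach S u w) :
    ∃ T, G.IsSpanTree u T := by
  classical
  have hex : ∀ w, ∃ n, G.reachIn S n u w := fun w => exists_reachIn_of_reach (h w)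
  let d w := Nat.find (hex w)
  have hpred : ∀ w, w ≠ u → ∃ e, G.tgt e = w ∧ d (G.src e) < d w := by
    intro w hw
    obtain ⟨m, hm⟩ : ∃ m, d w = m + 1 := Nat.exists_eq_succ_of_ne_zero fun h0 => by
      have hw0 := Nat.find_spec (hex w)
      rw [show Nat.find (hex w) = 0 from h0] at hw0
      exact hw hw0.symm
    obtain ⟨b, hb, e, -, rfl, rfl⟩ : G.reachIn S (m + 1) u w := hm ▸ Nat.find_spec (hex w)
    exact ⟨e, rfl, hm ▸ Nat.lt_succ_of_le (Nat.find_min' _ hb)⟩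
  choose pred htgt hlt using hpred
  refine ⟨Set.range fun w : {w // w ≠ u} => pred w.1 w.2, ?_, fun w hw => ?_, fun w => ?_⟩
  · rintro _ ⟨⟨w, hw⟩, rfl⟩
    rwa [htgt]
  · refine ⟨pred w hw, ⟨⟨⟨w, hw⟩, rfl⟩, htgt w hw⟩, ?_⟩
    rintro _ ⟨⟨⟨w', hw'⟩, rfl⟩, hw'w⟩
    obtain rfl : w' = w := (htgt w' hw').symm.trans hw'w
    rfl
  · induction hd : d w using Nat.strong_induction_on generalizing w with
    | _ n ih =>
      by_cases hw : w = u
      · subst hw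
        exact .refl
      · exact (ih _ (hd ▸ hlt w hw) _ rfl).tail ⟨pred w hw, ⟨⟨w, hw⟩, rfl⟩, rfl, htgt w hw⟩

theorem IsSpanTree.injOn_tgt {u : V} {T : Set E} (hT : G.IsSpanTree u T) : Set.InjOn G.tgt T :=
  fun e he _ hf hef => (hT.2.1 _ (hT.1 e he)).unique ⟨he, rfl⟩ ⟨hf, hef.symm⟩

theorem IsSpanTree.finite [Finite V] {u : V} {T : Set E} (hT : G.IsSpanTree u T) : T.Finite :=
  Set.Finite.of_injOn (Set.mapsTo_univ _ _) hT.injOn_tgt Set.finite_univ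

theorem IsSpanTree.ncard_eq {u : V} {T : Set E} (hT : G.IsSpanTree u T) :
    T.ncard = ({u}ᶜ : Set V).ncard :=
  Set.ncard_congr (fun e _ => G.tgt e) (fun e he => hT.1 e he)
    (fun _ _ he hf hef => hT.injOn_tgt he hf hef)
    (fun w hw => let ⟨e, he, _⟩ := hT.2.1 w hw; ⟨e, he.1, he.2⟩)

section Collapse

variable {H : Set E}

variable (G H) in
/-- The collapsing map `A : G → G_H(D)` on vertices. -/
def collapseMap (a : V) : Quot fun a b => ∃ e ∈ H, G.src e = a ∧ G.tgt e = b :=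
  Quot.mk _ a

theorem collapseMap_src_eq_tgt {e : E} (he : e ∈ H) :
    G.collapseMap H (G.src e) = G.collapseMap H (G.tgt e) :=
  Quot.sound ⟨e, he, rfl, rfl⟩

theorem reach.collapse {T : Set E} {a b : V} (h : G.reach T a b) :
    (G.collapse H).reach (Subtype.val ⁻¹' T) (G.collapseMap H a) (G.collapseMap H b) := by
  refine Relation.ReflTransGen.lift' (G.collapseMap H) (fun a b ⟨e, heT, hs, ht⟩ => ?_) _ _ h
  subst hs ht
  by_cases he : e ∈ H
  · change Relation.ReflTransGen _ _ _
    rw [collapseMap_src_eq_tgt he]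
  · exact .single ⟨⟨e, he⟩, heT, rfl, rfl⟩

theorem IsSpanTree.compl_subset_image {v : V} {T : Set E} (hT : G.IsSpanTree v T) :
    {G.collapseMap H v}ᶜ ⊆ (fun e => G.collapseMap H (G.tgt e)) '' (T \ H) := by
  intro c hc
  obtain ⟨w, rfl⟩ := Quot.mk_surjective c
  rcases (hT.2.2 w).collapse (H := H) |>.cases_tail with hwv | ⟨_, -, f, hf, -, hft⟩
  · exact absurd hwv hc
  · exact ⟨f.1, ⟨hf, f.2⟩, hft⟩

theorem IsSpanTree.ncard_compl_le_ncard_diff [Finite V] {v : V} {T : Set E}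
    (hT : G.IsSpanTree v T) : ({G.collapseMap H v}ᶜ : Set _).ncard ≤ (T \ H).ncard :=
  (Set.ncard_le_ncard hT.compl_subset_image (hT.finite.sdiff.image _)).trans
    (Set.ncard_image_le hT.finite.sdiff)

theorem IsSpanTree.isSpanTree_collapse_of_bijOn {v : V} {T : Set E} (hT : G.IsSpanTree v T)
    (hbij : Set.BijOn (fun e => G.collapseMap H (G.tgt e)) (T \ H) {G.collapseMap H v}ᶜ) :
    (G.collapse H).IsSpanTree (G.collapseMap H v) (Subtype.val ⁻¹' T) := by
  refine ⟨fun f hf => hbij.mapsTo ⟨hf, f.2⟩, fun c hc => ?_, fun c => ?_⟩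
  · obtain ⟨e, ⟨heT, heH⟩, rfl⟩ := hbij.surjOn hc
    exact ⟨⟨e, heH⟩, ⟨heT, rfl⟩,
      fun f ⟨hfT, hf⟩ => Subtype.ext (hbij.injOn ⟨hfT, f.2⟩ ⟨heT, heH⟩ hf)⟩
  · obtain ⟨w, rfl⟩ := Quot.mk_surjective c
    exact (hT.2.2 w).collapse

theorem IsSpanTree.subset_of_preimage_eq (hin : ∀ w, ∃! e, e ∈ H ∧ G.tgt e = w) {v : V}
    {T₁ T₂ : Set E} (h₁ : G.IsSpanTree v T₁) (h₂ : G.IsSpanTree v T₂)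
    (h : (Subtype.val ⁻¹' T₁ : Set {e // e ∉ H}) = Subtype.val ⁻¹' T₂) : T₁ ⊆ T₂ := by
  have hcompl : ∀ e ∉ H, e ∈ T₁ ↔ e ∈ T₂ := fun e he => Set.ext_iff.1 h ⟨e, he⟩
  intro e he
  by_cases heH : e ∈ H
  · obtain ⟨e₂, ⟨he₂, hte₂⟩, -⟩ := h₂.2.1 _ (h₁.1 e he)
    have he₂H : e₂ ∈ H := by
      by_contra hH
      exact hH (h₁.injOn_tgt ((hcompl e₂ hH).2 he₂) he hte₂ ▸ heH)
    rwa [(hin _).unique ⟨heH, rfl⟩ ⟨he₂H, hte₂⟩]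
  · exact (hcompl e heH).1 he

/-- Since `H` gives every vertex exactly one incoming and one outgoing edge, the classes of
`collapseMap` are the `H`-cycles, so a class can be traversed from any of its vertices `a`
without re-entering `a`. -/
theorem reach_of_collapseMap_eq [Finite V] (hin : ∀ w, ∃! e, e ∈ H ∧ G.tgt e = w)
    (hout : ∀ w, ∃! e, e ∈ H ∧ G.src e = w) {a b : V}
    (hab : G.collapseMap H a = G.collapseMap H b) :
    G.reach {e | e ∈ H ∧ G.collapseMap H (G.tgt e) = G.collapseMap H a ∧ G.tgt e ≠ a} a b := by
  set S := {e | e ∈ H ∧ G.collapseMap H (G.tgt e) = G.collapseMap H a ∧ G.tgt e ≠ a}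
  choose out hout_mem hout_src using fun w => (hout w).exists
  let σ w := G.tgt (out w)
  have hσ_inj : σ.Injective := fun x y hxy => by
    rw [← hout_src x, ← hout_src y, (hin _).unique ⟨hout_mem x, hxy⟩ ⟨hout_mem y, rfl⟩]
  have hσ_class : ∀ w, G.collapseMap H w = G.collapseMap H (σ w) := fun w => by
    simpa only [hout_src] using collapseMap_src_eq_tgt (G := G) (hout_mem w)
  -- `R` is closed under `σ`, hence, being finite, also under `σ⁻¹`; so it is a union of classes.
  let R : Set V := {w | G.collapseMap H w = G.collapseMap H a → G.reach S a w}
  have hR : Set.MapsTo σ R R := fun w hw hσw => by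
    by_cases h : σ w = a
    · rw [h]
      exact .refl
    · exact (hw ((hσ_class w).trans hσw)).tail ⟨out w, ⟨hout_mem w, hσw, h⟩, hout_src w, rfl⟩
  have hRσ : Set.BijOn σ R R :=
    ((Set.toFinite R).injOn_iff_bijOn_of_mapsTo hR).1 hσ_inj.injOn
  have hR_edge : ∀ e ∈ H, G.src e ∈ R ↔ G.tgt e ∈ R := by
    intro e he
    have hσe : G.tgt e = σ (G.src e) :=
      congrArg G.tgt ((hout _).unique ⟨he, rfl⟩ ⟨hout_mem _, hout_src _⟩)
    rw [hσe]
    refine ⟨fun h => hR h, fun h => ?_⟩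
    obtain ⟨x, hx, hxσ⟩ := hRσ.surjOn h
    rwa [← hσ_inj hxσ]
  have hRab : (a ∈ R) = (b ∈ R) :=
    congrArg (Quot.lift (· ∈ R) fun _ _ ⟨e, he, hs, ht⟩ => hs ▸ ht ▸ propext (hR_edge e he)) hab
  exact (hRab ▸ fun _ => .refl : b ∈ R) hab.symm

variable (G H) in
/-- The spanning tree of `G` over a spanning tree `T'` of `G_H(D)` with origin `A v`: each
Seifert circle in `H` is entered at a single vertex (`v`, or the terminal vertex of an edge of
`T'`), and is then run through along all of its edges but the one entering that vertex. -/
def liftTree (v : V) (T' : Set {e // e ∉ H}) : Set E :=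
  Subtype.val '' T' ∪ {e | e ∈ H ∧ G.tgt e ∉ insert v (G.tgt '' (Subtype.val '' T'))}

theorem preimage_liftTree (v : V) (T' : Set {e // e ∉ H}) :
    Subtype.val ⁻¹' G.liftTree H v T' = T' := by
  ext f
  refine ⟨?_, fun hf => Or.inl ⟨f, hf, rfl⟩⟩
  rintro (⟨g, hg, hgf⟩ | ⟨hfH, -⟩)
  · rwa [← Subtype.ext hgf]
  · exact absurd hfH f.2

theorem liftTree_diff (v : V) (T' : Set {e // e ∉ H}) :
    G.liftTree H v T' \ H = Subtype.val '' T' := by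
  ext e
  refine ⟨?_, ?_⟩
  · rintro ⟨⟨f, hf, rfl⟩ | ⟨heH, -⟩, hH⟩
    exacts [⟨f, hf, rfl⟩, absurd heH hH]
  · rintro ⟨f, hf, rfl⟩
    exact ⟨Or.inl ⟨f, hf, rfl⟩, f.2⟩

section LiftTree

variable {v : V} {T' : Set {e // e ∉ H}}
  (hT' : (G.collapse H).IsSpanTree (G.collapseMap H v) T')
include hT'

theorem ncard_liftTree_diff :
    (G.liftTree H v T' \ H).ncard = ({G.collapseMap H v}ᶜ : Set _).ncard := by
  rw [liftTree_diff, Set.ncard_image_of_injective _ Subtype.val_injective, hT'.ncard_eq]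

theorem mem_liftTree_of_entry {x : V} (hx : x ∈ insert v (G.tgt '' (Subtype.val '' T')))
    {e : E} (he : e ∈ H) (hex : G.collapseMap H (G.tgt e) = G.collapseMap H x)
    (hne : G.tgt e ≠ x) : e ∈ G.liftTree H v T' := by
  refine Or.inr ⟨he, ?_⟩
  rintro (hev | ⟨_, ⟨f, hf, rfl⟩, hfe⟩) <;> rcases hx with rfl | ⟨_, ⟨g, hg, rfl⟩, rfl⟩
  · exact hne hev
  · exact hT'.1 g hg (hex.symm.trans (congrArg _ hev))
  · exact hT'.1 f hf ((congrArg _ hfe).trans hex)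
  · have hfg : f = g :=
      (hT'.2.1 _ (hT'.1 g hg)).unique ⟨hf, (congrArg _ hfe).trans hex⟩ ⟨hg, rfl⟩
    exact hne (hfg ▸ hfe.symm)

theorem existsUnique_mem_liftTree (hin : ∀ w, ∃! e, e ∈ H ∧ G.tgt e = w) {w : V}
    (hw : w ≠ v) : ∃! e, e ∈ G.liftTree H v T' ∧ G.tgt e = w := by
  by_cases hentry : w ∈ G.tgt '' (Subtype.val '' T')
  · obtain ⟨_, ⟨f, hf, rfl⟩, rfl⟩ := hentry
    refine ⟨f.1, ⟨Or.inl ⟨f, hf, rfl⟩, rfl⟩, ?_⟩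
    rintro _ ⟨⟨g, hg, rfl⟩ | ⟨-, hnot⟩, hgf⟩
    · exact congrArg Subtype.val ((hT'.2.1 _ (hT'.1 f hf)).unique
        ⟨hg, congrArg (G.collapseMap H) hgf⟩ ⟨hf, rfl⟩)
    · exact absurd (Or.inr ⟨f.1, ⟨f, hf, rfl⟩, hgf.symm⟩) hnot
  · obtain ⟨e, ⟨heH, rfl⟩, huniq⟩ := hin w
    refine ⟨e, ⟨Or.inr ⟨heH, ?_⟩, rfl⟩, ?_⟩
    · rintro (h | h)
      exacts [hw h, hentry h]
    · rintro e' ⟨⟨g, hg, rfl⟩ | ⟨he'H, -⟩, he'⟩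
      · exact (hentry ⟨g.1, ⟨g, hg, rfl⟩, he'⟩).elim
      · exact huniq e' ⟨he'H, he'⟩

theorem reach_liftTree [Finite V] (hin : ∀ w, ∃! e, e ∈ H ∧ G.tgt e = w)
    (hout : ∀ w, ∃! e, e ∈ H ∧ G.src e = w) (w : V) : G.reach (G.liftTree H v T') v w := by
  have hclass : ∀ x ∈ insert v (G.tgt '' (Subtype.val '' T')), ∀ w,
      G.collapseMap H w = G.collapseMap H x → G.reach (G.liftTree H v T') x w :=
    fun x hx w hw => (reach_of_collapseMap_eq hin hout hw.symm).mono
      fun e ⟨he, hex, hne⟩ => mem_liftTree_of_entry hT' hx he hex hne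
  suffices ∀ c, (G.collapse H).reach T' (G.collapseMap H v) c →
      ∀ w, G.collapseMap H w = c → G.reach (G.liftTree H v T') v w from
    this _ (hT'.2.2 _) w rfl
  intro c hc
  induction hc with
  | refl => exact hclass v (Set.mem_insert _ _)
  | tail _ hstep ih =>
    obtain ⟨f, hf, hfs, rfl⟩ := hstep
    exact fun w hw => ((ih _ hfs).tail ⟨f.1, Or.inl ⟨f, hf, rfl⟩, rfl, rfl⟩).trans
      (hclass _ (Or.inr ⟨f.1, ⟨f, hf, rfl⟩, rfl⟩) w hw)

theorem isSpanTree_liftTree [Finite V] (hin : ∀ w, ∃! e, e ∈ H ∧ G.tgt e = w)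
    (hout : ∀ w, ∃! e, e ∈ H ∧ G.src e = w) : G.IsSpanTree v (G.liftTree H v T') := by
  refine ⟨?_, fun w hw => existsUnique_mem_liftTree hT' hin hw, reach_liftTree hT' hin hout⟩
  rintro _ (⟨f, hf, rfl⟩ | ⟨-, hnot⟩) hev
  · exact hT'.1 f hf (congrArg _ hev)
  · exact hnot (Or.inl hev)

theorem isHMaxSpanTree_liftTree [Finite V] (hin : ∀ w, ∃! e, e ∈ H ∧ G.tgt e = w)
    (hout : ∀ w, ∃! e, e ∈ H ∧ G.src e = w) :
    G.IsHMaxSpanTree H Hᶜ v (G.liftTree H v T') := by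
  refine ⟨isSpanTree_liftTree hT' hin hout, fun T hT => ?_⟩
  rw [← Set.sdiff_eq, ← Set.sdiff_eq, ncard_liftTree_diff hT']
  exact hT.ncard_compl_le_ncard_diff

end LiftTree

section HMax

variable [Finite V] (hin : ∀ w, ∃! e, e ∈ H ∧ G.tgt e = w)
  (hout : ∀ w, ∃! e, e ∈ H ∧ G.src e = w) {v : V} {T : Set E}
  (hT : G.IsHMaxSpanTree H Hᶜ v T)
include hin hout hT

theorem IsHMaxSpanTree.ncard_diff_le :
    (T \ H).ncard ≤ ({G.collapseMap H v}ᶜ : Set _).ncard := by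
  obtain ⟨T', hT'⟩ := (G.collapse H).exists_isSpanTree fun c => by
    obtain ⟨w, rfl⟩ := Quot.mk_surjective c
    exact (hT.1.2.2 w).collapse
  calc (T \ H).ncard ≤ (G.liftTree H v T' \ H).ncard := by
        simpa only [Set.sdiff_eq] using hT.2 _ (isSpanTree_liftTree hT' hin hout)
    _ = _ := ncard_liftTree_diff hT'

/-- The edges of `T` outside `H` enter the non-root Seifert circles bijectively: they enter every
such circle, and there are no more of them than circles by `H`-maximality. -/
theorem IsHMaxSpanTree.isSpanTree_collapse :
    (G.collapse H).IsSpanTree (G.collapseMap H v) (Subtype.val ⁻¹' T) :=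
  hT.1.isSpanTree_collapse_of_bijOn <| Set.bijOn_of_subset_image_of_ncard_le hT.1.finite.sdiff
    hT.1.compl_subset_image (hT.ncard_diff_le hin hout)

end HMax

end Collapse

end MultiDigraph

theorem crowell_collapse_bijection_general {V E : Type} [Fintype V]
    (G : MultiDigraph V E) (H K : Set E)
    (hpart : ∀ e : E, (e ∈ H ∧ e ∉ K) ∨ (e ∈ K ∧ e ∉ H))
    (hHin : ∀ v : V, ∃! e, e ∈ H ∧ G.tgt e = v)
    (hHout : ∀ v : V, ∃! e, e ∈ H ∧ G.src e = v) (v : V) :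
    Set.BijOn (fun T : Set E => {f : {e : E // e ∉ H} | f.1 ∈ T})
      {T : Set E | G.IsHMaxSpanTree H K v T}
      {T' : Set {e : E // e ∉ H} |
        (G.collapse H).IsSpanTree (Quot.mk _ v) T'} := by
  obtain rfl : K = Hᶜ := Set.ext fun e => by rcases hpart e with h | h <;> simp [h]
  refine ⟨fun T hT => hT.isSpanTree_collapse hHin hHout, fun T₁ h₁ T₂ h₂ h => ?_,
    fun T' hT' => ⟨G.liftTree H v T', MultiDigraph.isHMaxSpanTree_liftTree hT' hHin hHout,
      MultiDigraph.preimage_liftTree v T'⟩⟩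
  exact (h₁.1.subset_of_preimage_eq hHin h₂.1 h).antisymm
    (h₂.1.subset_of_preimage_eq hHin h₁.1 h.symm)

/-- **Crowell's bijection.**  Let `G` (with the orientation `o`) be the
underlying digraph of a reduced diagram `D` of a prime, special, alternating
link, and let `H`, `K` be the partition of the edges given by Crowell's rule.
(For such a diagram: `H` and `K` partition the edges; at each vertex there is
exactly one incoming and one outgoing edge of `H`, and likewise for `K` — the
Seifert circles of `D` are the cycles lying entirely in `H` or entirely in
`K`; and `G` is `O`-connected.)  Then the map `A` collapsing every Seifert
circle contained in `H` induces, for every vertex `v`, a bijection from the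
set of `H`-maximal directed spanning subtrees of `G` with origin `v` onto the
set of directed spanning subtrees of the collapsed digraph `G_H(D)` with
origin `A v`. -/
theorem crowell_collapse_bijection {V E : Type} [Fintype V] [Fintype E]
    (G : MultiDigraph V E) (H K : Set E)
    (hpart : ∀ e : E, (e ∈ H ∧ e ∉ K) ∨ (e ∈ K ∧ e ∉ H))
    (hHin : ∀ v : V, ∃! e, e ∈ H ∧ G.tgt e = v)
    (hHout : ∀ v : V, ∃! e, e ∈ H ∧ G.src e = v)
    (hKin : ∀ v : V, ∃! e, e ∈ K ∧ G.tgt e = v)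
    (hKout : ∀ v : V, ∃! e, e ∈ K ∧ G.src e = v)
    (hconn : G.OConnected) (v : V) :
    Set.BijOn (fun T : Set E => {f : {e : E // e ∉ H} | f.1 ∈ T})
      {T : Set E | G.IsHMaxSpanTree H K v T}
      {T' : Set {e : E // e ∉ H} |
        (G.collapse H).IsSpanTree (Quot.mk _ v) T'} :=
  crowell_collapse_bijection_general G H K hpart hHin hHout v
end
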